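/- arXiv:1810.06342 — 3 statements merged into one kernel-verified Lean document; each statement's English description precedes it below -/
import Mathlib

section
/- Let V be a nonzero finite-dimensional real vector space, B a symmetric positive definite bilinear form on V, q a positive real number, and φ : V → V a linear endomorphism satisfying B(φ x, φ y) = q² · B(x, y) for all x, y ∈ V. Then every eigenvalue λ ∈ ℂ of the complexified endomorphism (the base change of φ to ℂ ⊗_ℝ V) has absolute value |λ| = q. -/
open TensorProduct Polynomial

noncomputable def reV (V : Type*) [AddCommGroup V] [Module ℝ V] :
    ℂ ⊗[ℝ] V →ₗ[ℝ] V :=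
  (TensorProduct.lid ℝ V).toLinearMap ∘ₗ LinearMap.rTensor V Complex.reLm

noncomputable def imV (V : Type*) [AddCommGroup V] [Module ℝ V] :
    ℂ ⊗[ℝ] V →ₗ[ℝ] V :=
  (TensorProduct.lid ℝ V).toLinearMap ∘ₗ LinearMap.rTensor V Complex.imLm

lemma reV_tmul (V : Type*) [AddCommGroup V] [Module ℝ V] (c : ℂ) (x : V) :
    reV V (c ⊗ₜ[ℝ] x) = c.re • x := by
  simp [reV]

lemma imV_tmul (V : Type*) [AddCommGroup V] [Module ℝ V] (c : ℂ) (x : V) :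
    imV V (c ⊗ₜ[ℝ] x) = c.im • x := by
  simp [imV]

lemma reconstruct (V : Type*) [AddCommGroup V] [Module ℝ V] (v : ℂ ⊗[ℝ] V) :
    (1 : ℂ) ⊗ₜ[ℝ] (reV V v) + Complex.I ⊗ₜ[ℝ] (imV V v) = v := by
  induction v using TensorProduct.induction_on with
  | zero => simp
  | tmul c x =>
      rw [reV_tmul, imV_tmul, tmul_smul, tmul_smul, smul_tmul', smul_tmul',
        ← add_tmul]
      congr 1
      simp [Complex.real_smul, Complex.re_add_im]
  | add a b ha hb =>
      rw [map_add, map_add, tmul_add, tmul_add, add_add_add_comm, ha, hb]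

lemma reV_baseChange (V : Type*) [AddCommGroup V] [Module ℝ V]
    (φ : Module.End ℝ V) (v : ℂ ⊗[ℝ] V) :
    reV V (LinearMap.baseChange ℂ φ v) = φ (reV V v) := by
  induction v using TensorProduct.induction_on with
  | zero => simp
  | tmul c x => simp [reV_tmul]
  | add a b ha hb => simp [map_add, ha, hb]

lemma imV_baseChange (V : Type*) [AddCommGroup V] [Module ℝ V]
    (φ : Module.End ℝ V) (v : ℂ ⊗[ℝ] V) :
    imV V (LinearMap.baseChange ℂ φ v) = φ (imV V v) := by
  induction v using TensorProduct.induction_on with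
  | zero => simp
  | tmul c x => simp [imV_tmul]
  | add a b ha hb => simp [map_add, ha, hb]

lemma reV_smul (V : Type*) [AddCommGroup V] [Module ℝ V] (μ : ℂ) (v : ℂ ⊗[ℝ] V) :
    reV V (μ • v) = μ.re • reV V v - μ.im • imV V v := by
  induction v using TensorProduct.induction_on with
  | zero => simp
  | tmul c x =>
      rw [smul_tmul', reV_tmul, imV_tmul, reV_tmul, smul_eq_mul, Complex.mul_re]
      rw [sub_smul, smul_smul, smul_smul]
  | add a b ha hb =>
      rw [smul_add, map_add, ha, hb, map_add, map_add]
      module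

lemma imV_smul (V : Type*) [AddCommGroup V] [Module ℝ V] (μ : ℂ) (v : ℂ ⊗[ℝ] V) :
    imV V (μ • v) = μ.re • imV V v + μ.im • reV V v := by
  induction v using TensorProduct.induction_on with
  | zero => simp
  | tmul c x =>
      rw [smul_tmul', imV_tmul, reV_tmul, imV_tmul, smul_eq_mul, Complex.mul_im]
      rw [add_smul, smul_smul, smul_smul]
  | add a b ha hb =>
      rw [smul_add, map_add, ha, hb, map_add, map_add]
      module

theorem eigenvalues_of_complexified_similitude
    (V : Type*) [AddCommGroup V] [Module ℝ V] [FiniteDimensional ℝ V] [Nontrivial V]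
    (B : LinearMap.BilinForm ℝ V)
    (hsymm : ∀ x y : V, B x y = B y x)
    (hpos : ∀ x : V, x ≠ 0 → 0 < B x x)
    (q : ℝ) (hq : 0 < q)
    (φ : Module.End ℝ V)
    (hφ : ∀ x y : V, B (φ x) (φ y) = q ^ 2 * B x y)
    (μ : ℂ)
    (hμ : Module.End.HasEigenvalue (LinearMap.baseChange ℂ φ) μ) :
    ‖μ‖ = q := by
  obtain ⟨v, hv⟩ := hμ.exists_hasEigenvector
  have hv0 : v ≠ 0 := hv.right
  have heig : LinearMap.baseChange ℂ φ v = μ • v := hv.apply_eq_smul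
  set x := reV V v with hx
  set y := imV V v with hy
  have hnn : ∀ z : V, 0 ≤ B z z := by
    intro z
    rcases eq_or_ne z 0 with h | h
    · simp [h]
    · exact (hpos z h).le
  -- N v > 0
  have hNpos : 0 < B x x + B y y := by
    rcases eq_or_ne x 0 with h1 | h1
    · rcases eq_or_ne y 0 with h2 | h2
      · exfalso
        apply hv0
        rw [← reconstruct V v, ← hx, ← hy, h1, h2]
        simp
      · have := hpos y h2
        simp [h1]
        linarith
    · have := hpos x h1
      have := hnn y
      linarith
  -- compute both ways
  have h1 : B (reV V (LinearMap.baseChange ℂ φ v)) (reV V (LinearMap.baseChange ℂ φ v))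
      + B (imV V (LinearMap.baseChange ℂ φ v)) (imV V (LinearMap.baseChange ℂ φ v))
      = q ^ 2 * (B x x + B y y) := by
    rw [reV_baseChange, imV_baseChange, ← hx, ← hy, hφ, hφ]
    ring
  have h2 : B (reV V (μ • v)) (reV V (μ • v)) + B (imV V (μ • v)) (imV V (μ • v))
      = (μ.re ^ 2 + μ.im ^ 2) * (B x x + B y y) := by
    rw [reV_smul, imV_smul, ← hx, ← hy]
    simp only [map_sub, map_add, map_smul, LinearMap.sub_apply, LinearMap.add_apply,
      LinearMap.smul_apply, smul_eq_mul]
    rw [hsymm y x]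
    ring
  rw [heig] at h1
  rw [h2] at h1
  have hsq : μ.re ^ 2 + μ.im ^ 2 = q ^ 2 := by
    have := mul_right_cancel₀ (ne_of_gt hNpos) h1
    linarith
  have habs : ‖μ‖ ^ 2 = q ^ 2 := by
    rw [Complex.sq_norm, Complex.normSq_apply]
    nlinarith [hsq]
  nlinarith [norm_nonneg μ, hq, habs]
end

section
/- Let V be a nonzero finite-dimensional real vector space, B a symmetric positive definite bilinear form on V, q a positive real number, and φ : V → V a linear endomorphism satisfying B(φ x, φ y) = q² · B(x, y) for all x, y ∈ V. Then the complexified endomorphism (the base change of φ to ℂ ⊗_ℝ V) is semisimple, i.e. every invariant subspace of ℂ ⊗_ℝ V has an invariant complement (equivalently, the complexification of φ is diagonalizable). -/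
open TensorProduct Polynomial

private lemma real_similitude_isSemisimple
    (V : Type*) [AddCommGroup V] [Module ℝ V] [FiniteDimensional ℝ V]
    (B : LinearMap.BilinForm ℝ V)
    (hsymm : ∀ x y : V, B x y = B y x)
    (hpos : ∀ x : V, x ≠ 0 → 0 < B x x)
    (q : ℝ) (hq : 0 < q)
    (φ : Module.End ℝ V)
    (hφ : ∀ x y : V, B (φ x) (φ y) = q ^ 2 * B x y) :
    φ.IsSemisimple := by
  have hrefl : B.IsRefl := fun x y h => by rw [hsymm]; exact h
  -- φ is injective
  have hinj : Function.Injective φ := by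
    intro x y hxy
    by_contra hne
    have hx : x - y ≠ 0 := sub_ne_zero.mpr hne
    have h0 : φ (x - y) = 0 := by simp [map_sub, hxy]
    have := hφ (x - y) (x - y)
    rw [h0] at this
    simp only [map_zero, LinearMap.zero_apply] at this
    have hq2 : 0 < q ^ 2 * B (x - y) (x - y) :=
      mul_pos (pow_pos hq 2) (hpos _ hx)
    rw [← this] at hq2
    exact lt_irrefl 0 hq2
  rw [Module.End.isSemisimple_iff]
  intro W hW
  -- φ maps W onto W
  have hWmap : Submodule.map φ W = W := by
    have hle : Submodule.map φ W ≤ W := by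
      rintro _ ⟨x, hx, rfl⟩
      exact hW hx
    have : Module.finrank ℝ (Submodule.map φ W) = Module.finrank ℝ W :=
      (Submodule.equivMapOfInjective φ hinj W).symm.finrank_eq
    exact Submodule.eq_of_le_of_finrank_eq hle this
  refine ⟨B.orthogonal W, ?_, ?_⟩
  · -- orthogonal complement is invariant
    intro v hv
    rw [Submodule.mem_comap, LinearMap.BilinForm.mem_orthogonal_iff]
    intro n hn
    rw [← hWmap] at hn
    obtain ⟨n', hn', rfl⟩ := hn
    rw [hφ]
    have := hv n' hn'
    have this : B n' v = 0 := this
    rw [this, mul_zero]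
  · -- complement via nondegeneracy of the restriction
    refine LinearMap.BilinForm.isCompl_orthogonal_of_restrict_nondegenerate hrefl ?_
    refine (LinearMap.IsRefl.nondegenerate_iff_separatingLeft (B := B.restrict W) (fun x y h => hrefl _ _ h)).mpr ?_
    intro ⟨x, hx⟩ h
    ext
    by_contra hx0
    have := h ⟨x, hx⟩
    simp only [LinearMap.BilinForm.restrict_apply] at this
    exact (hpos x hx0).ne' this

theorem complexified_similitude_isSemisimple
    (V : Type*) [AddCommGroup V] [Module ℝ V] [FiniteDimensional ℝ V] [Nontrivial V]
    (B : LinearMap.BilinForm ℝ V)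
    (hsymm : ∀ x y : V, B x y = B y x)
    (hpos : ∀ x : V, x ≠ 0 → 0 < B x x)
    (q : ℝ) (hq : 0 < q)
    (φ : Module.End ℝ V)
    (hφ : ∀ x y : V, B (φ x) (φ y) = q ^ 2 * B x y) :
    Module.End.IsSemisimple (LinearMap.baseChange ℂ φ) := by
  have hss : φ.IsSemisimple := real_similitude_isSemisimple V B hsymm hpos q hq φ hφ
  set p : ℝ[X] := minpoly ℝ φ with hp
  have hsqf : Squarefree p := hss.minpoly_squarefree
  have hsep : p.Separable := (PerfectField.separable_iff_squarefree).mpr hsqf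
  have hsepC : (p.map (algebraMap ℝ ℂ)).Separable := hsep.map
  have hsqfC : Squarefree (p.map (algebraMap ℝ ℂ)) := hsepC.squarefree
  refine Module.End.isSemisimple_of_squarefree_aeval_eq_zero hsqfC ?_
  rw [aeval_map_algebraMap]
  have : aeval (LinearMap.baseChange ℂ φ) p
      = (Module.End.baseChangeHom ℝ ℂ V) (aeval φ p) := by
    exact aeval_algHom_apply (Module.End.baseChangeHom ℝ ℂ V) φ p
  rw [this, minpoly.aeval, map_zero]
end

section
/- Let F be a field, V a nonzero finite-dimensional F-vector space, φ : V → V a linear endomorphism, and W ⊆ V a φ-invariant subspace (φ(W) ⊆ W). Let P be the minimal polynomial of the restriction of φ to W and Q the minimal polynomial of the endomorphism induced by φ on the quotient V/W, and suppose P and Q are coprime in F[X]. Then V is the internal direct sum of W and K := ker Q(φ) (i.e. W ∩ K = 0 and W + K = V), the subspace K is φ-invariant, and the quotient map V → V/W restricts to a linear isomorphism K ≅ V/W that intertwines φ with the induced endomorphism of V/W. -/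
open Polynomial

lemma aeval_restrict_eq' {F V : Type*} [Field F] [AddCommGroup V] [Module F V]
    (φ : Module.End F V) (W : Submodule F V) (hW : ∀ x ∈ W, φ x ∈ W)
    (p : F[X]) (x : W) :
    (Polynomial.aeval φ p) (x : V) = ((Polynomial.aeval (φ.restrict hW) p x : W) : V) := by
  induction p using Polynomial.induction_on' with
  | add p q hp hq => simp [hp, hq]
  | monomial n a =>
    simp only [aeval_monomial, Module.End.mul_apply, Module.algebraMap_end_apply,
      Module.End.pow_restrict n hW, LinearMap.restrict_apply, SetLike.val_smul]

lemma aeval_mapQ_eq' {F V : Type*} [Field F] [AddCommGroup V] [Module F V]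
    (φ : Module.End F V) (W : Submodule F V) (hW : ∀ x ∈ W, φ x ∈ W)
    (p : F[X]) (x : V) :
    (Polynomial.aeval (W.mapQ W φ hW) p) (W.mkQ x) = W.mkQ ((Polynomial.aeval φ p) x) := by
  have hle : W ≤ W.comap φ := fun y hy => hW y hy
  induction p using Polynomial.induction_on' with
  | add p q hp hq =>
    rw [map_add, map_add, LinearMap.add_apply, hp, hq, LinearMap.add_apply, map_add]
  | monomial n a =>
    simp only [aeval_monomial, Module.End.mul_apply, Module.algebraMap_end_apply, map_smul]
    congr 1
    rw [← Submodule.mapQ_pow W hle n]; simp [Submodule.mapQ_apply, Submodule.mkQ_apply]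

theorem splitting_from_coprime_minpolys
    (F : Type*) [Field F] (V : Type*) [AddCommGroup V] [Module F V]
    [FiniteDimensional F V] [Nontrivial V]
    (φ : Module.End F V) (W : Submodule F V) (hW : ∀ x ∈ W, φ x ∈ W)
    (hco : IsCoprime (minpoly F (φ.restrict hW)) (minpoly F (W.mapQ W φ hW)))
    (K : Submodule F V)
    (hK : K = LinearMap.ker (Polynomial.aeval φ (minpoly F (W.mapQ W φ hW)))) :
    W ⊓ K = ⊥ ∧ W ⊔ K = ⊤ ∧ (∀ x ∈ K, φ x ∈ K) ∧
    Function.Bijective (W.mkQ.comp K.subtype) ∧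
    ∀ x : K, W.mkQ (φ x) = (W.mapQ W φ hW) (W.mkQ x) := by
  set P := minpoly F (φ.restrict hW) with hP
  set Q := minpoly F (W.mapQ W φ hW) with hQ
  obtain ⟨A, B, hAB⟩ := hco
  -- basic facts
  have hmul : ∀ (p q : F[X]) (x : V),
      Polynomial.aeval φ (p * q) x = Polynomial.aeval φ p (Polynomial.aeval φ q x) := by
    intro p q x; rw [map_mul]; rfl
  have hinv : ∀ (p : F[X]) (y : V), y ∈ W → Polynomial.aeval φ p y ∈ W := by
    intro p y hy
    rw [aeval_restrict_eq' φ W hW p ⟨y, hy⟩]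
    exact Submodule.coe_mem _
  have hPkill : ∀ y ∈ W, Polynomial.aeval φ P y = 0 := by
    intro y hy
    rw [aeval_restrict_eq' φ W hW P ⟨y, hy⟩, minpoly.aeval]
    simp
  have hQtoW : ∀ x : V, Polynomial.aeval φ Q x ∈ W := by
    intro x
    have h0 : W.mkQ (Polynomial.aeval φ Q x) = 0 := by
      rw [← aeval_mapQ_eq' φ W hW Q x, minpoly.aeval]
      simp
    rwa [← Submodule.ker_mkQ W, LinearMap.mem_ker]
  have hdecomp : ∀ x : V,
      Polynomial.aeval φ A (Polynomial.aeval φ P x)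
        + Polynomial.aeval φ B (Polynomial.aeval φ Q x) = x := by
    intro x
    have : Polynomial.aeval φ (A * P + B * Q) x = x := by
      rw [hAB]; simp
    rw [map_add, LinearMap.add_apply, hmul, hmul] at this
    exact this
  have hKmem : ∀ x : V, x ∈ K ↔ Polynomial.aeval φ Q x = 0 := by
    intro x; rw [hK, LinearMap.mem_ker]
  -- inf
  have hinf : W ⊓ K = ⊥ := by
    rw [Submodule.eq_bot_iff]
    rintro x ⟨hxW, hxK⟩
    have h1 : Polynomial.aeval φ P x = 0 := hPkill x hxW
    have h2 : Polynomial.aeval φ Q x = 0 := (hKmem x).1 hxK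
    have := hdecomp x
    rw [h1, h2, map_zero, map_zero, add_zero] at this
    exact this.symm
  -- sup
  have hsup : W ⊔ K = ⊤ := by
    rw [Submodule.eq_top_iff']
    intro x
    have hu : Polynomial.aeval φ B (Polynomial.aeval φ Q x) ∈ W :=
      hinv B _ (hQtoW x)
    have hv : Polynomial.aeval φ A (Polynomial.aeval φ P x) ∈ K := by
      rw [hKmem]
      have : Polynomial.aeval φ (Q * (A * P)) x = Polynomial.aeval φ (A * (P * Q)) x := by
        ring_nf
      rw [hmul, hmul, hmul, hmul] at this
      rw [this, hPkill _ (hQtoW x)]; simp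
    rw [← hdecomp x]
    exact Submodule.add_mem _ (Submodule.mem_sup_right hv) (Submodule.mem_sup_left hu)
  -- invariance of K
  have hcommφ : ∀ x : V, Polynomial.aeval φ Q (φ x) = φ (Polynomial.aeval φ Q x) := by
    intro x
    have h1 : Polynomial.aeval φ (Q * X) x = Polynomial.aeval φ (X * Q) x := by
      rw [mul_comm]
    rw [hmul, hmul, aeval_X] at h1
    exact h1
  have hKinv : ∀ x ∈ K, φ x ∈ K := by
    intro x hx
    rw [hKmem] at hx ⊢
    rw [hcommφ, hx, map_zero]
  refine ⟨hinf, hsup, hKinv, ⟨?_, ?_⟩, ?_⟩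
  · -- injective
    intro a b hab
    have h0 : W.mkQ ((a : V) - b) = 0 := by
      rw [map_sub, sub_eq_zero]; exact hab
    have hmemW : (a : V) - (b : V) ∈ W := by
      rwa [← Submodule.ker_mkQ W, LinearMap.mem_ker]
    have hmemK : (a : V) - (b : V) ∈ K := Submodule.sub_mem K a.2 b.2
    have : (a : V) - (b : V) ∈ W ⊓ K := ⟨hmemW, hmemK⟩
    rw [hinf, Submodule.mem_bot, sub_eq_zero] at this
    exact Subtype.ext this
  · -- surjective
    intro y
    obtain ⟨x, rfl⟩ := Submodule.mkQ_surjective W y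
    have hx : x ∈ W ⊔ K := hsup ▸ Submodule.mem_top
    obtain ⟨w, hw, k, hk, rfl⟩ := Submodule.mem_sup.mp hx
    refine ⟨⟨k, hk⟩, ?_⟩
    simp only [LinearMap.coe_comp, Function.comp_apply, Submodule.coe_subtype]
    have hw0 : W.mkQ w = 0 := by rwa [Submodule.mkQ_apply, Submodule.Quotient.mk_eq_zero]
    rw [map_add, hw0, zero_add]
  · intro x
    rw [Submodule.mkQ_apply, Submodule.mkQ_apply, Submodule.mapQ_apply]
end
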